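/- arXiv:math/0507399 — 2 statements merged into one kernel-verified Lean document; each statement's English description precedes it below -/
import Mathlib

section
/- Let X, Y ∈ GL_n(k) with X² = Y³ = I, Λ = XYXY² diagonal, and Γ = XY²XY diagonal. If Y has a nonzero entry in position (i,j), then Λ_{ii} · Γ_{jj} = 1. -/
/-! Since `X² = Y³ = 1`, the word `(XYXY²) Y (XY²XY)` collapses to `Y`. When `Λ = XYXY²` and
`Γ = XY²XY` are diagonal, the `(i, j)` entry of `Λ Y Γ` is `Λᵢᵢ Yᵢⱼ Γⱼⱼ`, so `Λᵢᵢ Γⱼⱼ = 1`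
wherever `Yᵢⱼ ≠ 0`. -/

open Matrix

theorem mul_mul_mul_sq_mul_mul_mul_sq_mul_mul {M : Type*} [Monoid M] {x y : M}
    (hx : x ^ 2 = 1) (hy : y ^ 3 = 1) :
    x * y * x * y ^ 2 * y * (x * y ^ 2 * x * y) = y := by
  have hxx : ∀ m : M, x * (x * m) = m := fun m => by rw [← mul_assoc, ← sq, hx, one_mul]
  have hyy : ∀ m : M, y ^ 2 * (y * m) = m := fun m => by
    rw [← mul_assoc, ← pow_succ, hy, one_mul]
  have hyy' : ∀ m : M, y * (y ^ 2 * m) = m := fun m => by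
    rw [← mul_assoc, ← pow_succ', hy, one_mul]
  simp only [mul_assoc]
  rw [hyy, hxx, hyy', hxx]

theorem Matrix.IsDiag.mul_mul_apply {ι R : Type*} [Fintype ι] [DecidableEq ι] [Semiring R]
    {D E : Matrix ι ι R} (hD : D.IsDiag) (hE : E.IsDiag) (M : Matrix ι ι R) (i j : ι) :
    (D * M * E) i j = D i i * M i j * E j j := by
  conv_lhs => rw [← hD.diagonal_diag, ← hE.diagonal_diag, mul_diagonal, diagonal_mul]
  rfl

theorem stmt_7_general {k : Type*} [Field k] {n : ℕ}
    (X Y : Matrix (Fin n) (Fin n) k)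
    (hX2 : X ^ 2 = 1) (hY3 : Y ^ 3 = 1)
    (hΛ : (X * Y * X * Y ^ 2).IsDiag) (hΓ : (X * Y ^ 2 * X * Y).IsDiag)
    (i j : Fin n) (hij : Y i j ≠ 0) :
    (X * Y * X * Y ^ 2) i i * (X * Y ^ 2 * X * Y) j j = 1 := by
  have hentry := hΛ.mul_mul_apply hΓ Y i j
  rw [mul_mul_mul_sq_mul_mul_mul_sq_mul_mul hX2 hY3] at hentry
  apply mul_right_cancel₀ hij
  linear_combination hentry.symm

theorem stmt_7 {k : Type*} [Field k] {n : ℕ}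
    (X Y : Matrix (Fin n) (Fin n) k) (hX : IsUnit X) (hY : IsUnit Y)
    (hX2 : X ^ 2 = 1) (hY3 : Y ^ 3 = 1)
    (hΛ : (X * Y * X * Y ^ 2).IsDiag) (hΓ : (X * Y ^ 2 * X * Y).IsDiag)
    (i j : Fin n) (hij : Y i j ≠ 0) :
    (X * Y * X * Y ^ 2) i i * (X * Y ^ 2 * X * Y) j j = 1 :=
  stmt_7_general X Y hX2 hY3 hΛ hΓ i j hij
end

section
/- Let X, Y ∈ GL_n(k) with X² = Y³ = I, and suppose Λ = XYXY² and Γ = XY²XY are diagonal with Λ² = I. Then with A = XY and B = YX, one has A³ = B³, ABA = BAB, and A⁶ = B⁶ = I. -/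
/-!
With `λ = x y x y²` and `γ = x y² x y`, the relations `x² = y³ = 1` alone give the word identities
`(x λ)² = (x γ)² = 1`, `γ · y² λ y = 1`, `(x y)³ = λ x γ` and `(y x)³ = x (x y)³ x`, and reduce
both sides of the braid relation to `x`.
Once `λ² = 1`, the first identity makes `x` commute with `λ`; `y² λ y` is then an involution, so its
left inverse `γ` equals it, is an involution too, and commutes with `x`. Hence `(x y)³ = x · λγ`,
where `λγ` is an involution (as `λ` and `γ` commute) commuting with `x`; so `(x y)³` is an involution
fixed by conjugation with `x`, which gives `(x y)³ = (y x)³` and `(x y)⁶ = 1`.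
-/

section Monoid

variable {M : Type*} [Monoid M] {x y a : M}

def lamWord (x y : M) : M := x * y * x * y ^ 2

def gamWord (x y : M) : M := x * y ^ 2 * x * y

theorem mul_mul_cancel_of_sq_eq_one (hx : x ^ 2 = 1) (z : M) : x * (x * z) = z := by
  rw [← mul_assoc, ← sq, hx, one_mul]

theorem mul_mul_mul_cancel_of_pow_three_eq_one (hy : y ^ 3 = 1) (z : M) :
    y * (y * (y * z)) = z := by
  rw [← mul_assoc, ← mul_assoc, ← pow_three', hy, one_mul]

theorem commute_of_sq_eq_one (hx : x ^ 2 = 1) (ha : a ^ 2 = 1) (hxa : (x * a) ^ 2 = 1) :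
    Commute x a := by
  refine left_inv_eq_right_inv (a := x * a) ((sq _).symm.trans hxa) ?_
  rw [mul_assoc, mul_mul_cancel_of_sq_eq_one ha, ← sq, hx]

theorem sq_conj_eq_one_of_pow_three_eq_one (hy : y ^ 3 = 1) (ha : a ^ 2 = 1) :
    (y ^ 2 * a * y) ^ 2 = 1 := by
  simp only [pow_succ, pow_zero, one_mul, mul_assoc, mul_mul_cancel_of_sq_eq_one ha,
    mul_mul_mul_cancel_of_pow_three_eq_one hy, (pow_three y).symm.trans hy]

theorem sq_mul_lamWord_eq_one (hx : x ^ 2 = 1) (hy : y ^ 3 = 1) :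
    (x * lamWord x y) ^ 2 = 1 := by
  simp only [lamWord, pow_succ, pow_zero, one_mul, mul_assoc, mul_mul_cancel_of_sq_eq_one hx,
    mul_mul_mul_cancel_of_pow_three_eq_one hy, (pow_three y).symm.trans hy]

theorem sq_mul_gamWord_eq_one (hx : x ^ 2 = 1) (hy : y ^ 3 = 1) :
    (x * gamWord x y) ^ 2 = 1 := by
  simp only [gamWord, pow_succ, pow_zero, one_mul, mul_assoc, mul_mul_cancel_of_sq_eq_one hx,
    mul_mul_mul_cancel_of_pow_three_eq_one hy, (pow_three y).symm.trans hy]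

theorem gamWord_mul_conj_lamWord_eq_one (hx : x ^ 2 = 1) (hy : y ^ 3 = 1) :
    gamWord x y * (y ^ 2 * lamWord x y * y) = 1 := by
  simp only [lamWord, gamWord, pow_succ, pow_zero, one_mul, mul_assoc,
    mul_mul_cancel_of_sq_eq_one hx, mul_mul_mul_cancel_of_pow_three_eq_one hy,
    (pow_three y).symm.trans hy]

theorem mul_pow_three_eq_lamWord_mul_gamWord (hx : x ^ 2 = 1) (hy : y ^ 3 = 1) :
    (x * y) ^ 3 = lamWord x y * x * gamWord x y := by
  simp only [lamWord, gamWord, pow_succ, pow_zero, one_mul, mul_assoc,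
    mul_mul_cancel_of_sq_eq_one hx, mul_mul_mul_cancel_of_pow_three_eq_one hy]

theorem swap_pow_three_eq_conj (hx : x ^ 2 = 1) : (y * x) ^ 3 = x * (x * y) ^ 3 * x := by
  simp only [pow_succ, pow_zero, one_mul, mul_assoc, mul_mul_cancel_of_sq_eq_one hx]

theorem mul_swap_braid (hx : x ^ 2 = 1) (hy : y ^ 3 = 1) :
    x * y * (y * x) * (x * y) = y * x * (x * y) * (y * x) := by
  simp only [mul_assoc, mul_mul_cancel_of_sq_eq_one hx, mul_mul_mul_cancel_of_pow_three_eq_one hy,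
    (pow_three y).symm.trans hy, mul_one]

theorem mul_pow_three_eq_swap_and_pow_six_eq_one (hx : x ^ 2 = 1) (hy : y ^ 3 = 1)
    (hl : lamWord x y ^ 2 = 1) (hlg_comm : Commute (lamWord x y) (gamWord x y)) :
    (x * y) ^ 3 = (y * x) ^ 3 ∧ (x * y) ^ 6 = 1 := by
  set l := lamWord x y
  set g := gamWord x y
  have hxl : Commute x l := commute_of_sq_eq_one hx hl (sq_mul_lamWord_eq_one hx hy)
  have hconj := sq_conj_eq_one_of_pow_three_eq_one hy hl
  have hg : g ^ 2 = 1 := by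
    rwa [← left_inv_eq_right_inv (gamWord_mul_conj_lamWord_eq_one hx hy)
      ((sq _).symm.trans hconj)] at hconj
  have hxg : Commute x g := commute_of_sq_eq_one hx hg (sq_mul_gamWord_eq_one hx hy)
  have hxlg : Commute x (l * g) := hxl.mul_right hxg
  have hlg : (l * g) ^ 2 = 1 := by rw [hlg_comm.mul_pow, hl, hg, one_mul]
  have hcube : (x * y) ^ 3 = x * (l * g) := by
    rw [mul_pow_three_eq_lamWord_mul_gamWord hx hy, ← hxl.eq, mul_assoc]
  have hcube_sq : ((x * y) ^ 3) ^ 2 = 1 := by rw [hcube, hxlg.mul_pow, hx, hlg, one_mul]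
  refine ⟨?_, by rw [show 6 = 3 * 2 by rfl, pow_mul, hcube_sq]⟩
  rw [swap_pow_three_eq_conj hx, hcube, ← mul_assoc x x, ← sq, hx, one_mul, hxlg.eq]

end Monoid

theorem Matrix.IsDiag.commute {n R : Type*} [Fintype n] [DecidableEq n] [CommSemiring R]
    {A B : Matrix n n R} (hA : A.IsDiag) (hB : B.IsDiag) : Commute A B := by
  rw [← hA.diagonal_diag, ← hB.diagonal_diag]
  exact commute_diagonal _ _

theorem stmt_14_general {k : Type*} [Field k] {n : ℕ}
    (X Y : Matrix (Fin n) (Fin n) k)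
    (hX2 : X ^ 2 = 1) (hY3 : Y ^ 3 = 1)
    (hΛ : (X * Y * X * Y ^ 2).IsDiag) (hΓ : (X * Y ^ 2 * X * Y).IsDiag)
    (hΛ2 : (X * Y * X * Y ^ 2) ^ 2 = 1) :
    (X * Y) ^ 3 = (Y * X) ^ 3 ∧
    (X * Y) * (Y * X) * (X * Y) = (Y * X) * (X * Y) * (Y * X) ∧
    (X * Y) ^ 6 = 1 ∧ (Y * X) ^ 6 = 1 := by
  obtain ⟨hcube, hsix⟩ :=
    mul_pow_three_eq_swap_and_pow_six_eq_one hX2 hY3 hΛ2 (hΛ.commute hΓ)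
  refine ⟨hcube, mul_swap_braid hX2 hY3, hsix, ?_⟩
  rw [show 6 = 3 * 2 by rfl, pow_mul, ← hcube, ← pow_mul, hsix]

theorem stmt_14 {k : Type*} [Field k] {n : ℕ}
    (X Y : Matrix (Fin n) (Fin n) k) (hX : IsUnit X) (hY : IsUnit Y)
    (hX2 : X ^ 2 = 1) (hY3 : Y ^ 3 = 1)
    (hΛ : (X * Y * X * Y ^ 2).IsDiag) (hΓ : (X * Y ^ 2 * X * Y).IsDiag)
    (hΛ2 : (X * Y * X * Y ^ 2) ^ 2 = 1) :
    (X * Y) ^ 3 = (Y * X) ^ 3 ∧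
    (X * Y) * (Y * X) * (X * Y) = (Y * X) * (X * Y) * (Y * X) ∧
    (X * Y) ^ 6 = 1 ∧ (Y * X) ^ 6 = 1 :=
  stmt_14_general X Y hX2 hY3 hΛ hΓ hΛ2
end
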